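/- Suppose q ≠ r, q ∣ s, q ∣ Δ, and that (z,s) satisfies conditions (i)–(ii). Then for all 0 ≤ j, k ≤ r−1 with j ≠ k one has v_q(γ_k − γ_j) = v_q(s)/r. -/

import Mathlib

open Polynomial

section Aux
variable {K : Type*} [Field K] (v : K → WithTop ℚ)
  (h0 : ∀ x, v x = ⊤ ↔ x = 0) (hmul : ∀ x y, v (x * y) = v x + v y)
  (hadd : ∀ x y, min (v x) (v y) ≤ v (x + y))

include h0

lemma aux_fin {x : K} (hx : x ≠ 0) : ∃ c : ℚ, v x = (c : WithTop ℚ) := by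
  have : v x ≠ ⊤ := fun h => hx ((h0 x).1 h)
  obtain ⟨c, hc⟩ := WithTop.ne_top_iff_exists.1 this
  exact ⟨c, hc.symm⟩

include hmul

lemma aux_one : v (1 : K) = 0 := by
  obtain ⟨c, hc⟩ := aux_fin v h0 (one_ne_zero (α := K))
  have := hmul 1 1
  rw [mul_one, hc] at this
  have : c = c + c := by exact_mod_cast this
  have : c = 0 := by linarith
  rw [hc, this]; rfl

lemma aux_neg (x : K) : v (-x) = v x := by
  have hm1 : v (-1 : K) = 0 := by
    obtain ⟨c, hc⟩ := aux_fin v h0 (neg_ne_zero.2 (one_ne_zero (α := K)))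
    have := hmul (-1) (-1)
    rw [neg_mul_neg, one_mul, aux_one v h0 hmul, hc] at this
    have : (0 : ℚ) = c + c := by exact_mod_cast this
    have : c = 0 := by linarith
    rw [hc, this]; rfl
  have := hmul (-1) x
  rw [neg_one_mul, hm1, zero_add] at this
  exact this

lemma aux_pow {x : K} {c : ℚ} (hc : v x = (c : WithTop ℚ)) (n : ℕ) :
    v (x ^ n) = ((n * c : ℚ) : WithTop ℚ) := by
  induction n with
  | zero => simpa using aux_one v h0 hmul
  | succ n ih =>
      rw [pow_succ, hmul, ih, hc, ← WithTop.coe_add]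
      congr 1
      push_cast
      ring

lemma aux_pow_inv {x : K} (hx : x ≠ 0) {n : ℕ} (hn : n ≠ 0) {d : ℚ}
    (h : v (x ^ n) = (d : WithTop ℚ)) : v x = ((d / n : ℚ) : WithTop ℚ) := by
  obtain ⟨c, hc⟩ := aux_fin v h0 hx
  rw [aux_pow v h0 hmul hc n] at h
  have h2 : (n : ℚ) * c = d := by exact_mod_cast h
  have hn' : (n : ℚ) ≠ 0 := Nat.cast_ne_zero.2 hn
  rw [hc]
  congr 1
  field_simp
  linarith [h2]

include hadd

lemma aux_lt (x y : K) (hlt : v x < v y) : v (x + y) = v x := by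
  refine le_antisymm ?_ ?_
  · by_contra h
    push_neg at h
    have h2 := hadd (x + y) (-y)
    rw [add_neg_cancel_right, aux_neg v h0 hmul] at h2
    have h3 : v x < min (v (x + y)) (v y) := lt_min h hlt
    exact absurd (lt_of_lt_of_le h3 h2) (lt_irrefl _)
  · have := hadd x y
    rwa [min_eq_left hlt.le] at this

lemma aux_ne (x y : K) (hne : v x ≠ v y) : v (x + y) = min (v x) (v y) := by
  rcases lt_or_gt_of_ne hne with h | h
  · rw [aux_lt v h0 hmul hadd x y h, min_eq_left h.le]
  · rw [add_comm, aux_lt v h0 hmul hadd y x h, min_eq_right h.le]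

omit hadd in
lemma aux_prod {I : Type*} (S : Finset I) (f : I → K) :
    v (∏ i ∈ S, f i) = ∑ i ∈ S, v (f i) := by
  classical
  induction S using Finset.induction with
  | empty => simpa using aux_one v h0 hmul
  | insert a S hnotmem ih =>
      rw [Finset.prod_insert hnotmem, Finset.sum_insert hnotmem, hmul, ih]

end Aux

section Main

lemma padicValInt_pow' {p : ℕ} [Fact p.Prime] {n : ℤ} (hn : n ≠ 0) (k : ℕ) :
    padicValInt p (n ^ k) = k * padicValInt p n := by
  induction k with
  | zero => simp
  | succ k ih =>
      rw [pow_succ, padicValInt.mul (pow_ne_zero _ hn) hn, ih]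
      ring

lemma aux_int {q : ℕ} [Fact q.Prime] {K : Type*} [Field K] [Algebra ℚ_[q] K]
    (v : K → WithTop ℚ)
    (hext : ∀ x : ℚ_[q], x ≠ 0 → v (algebraMap ℚ_[q] K x) = ((x.valuation : ℚ) : WithTop ℚ))
    {n : ℤ} (hn : n ≠ 0) : v ((n : K)) = ((padicValInt q n : ℚ) : WithTop ℚ) := by
  have h1 : ((n : ℚ_[q]) : ℚ_[q]) ≠ 0 := Int.cast_ne_zero.2 hn
  have h2 : (n : K) = algebraMap ℚ_[q] K ((n : ℚ_[q])) := (map_intCast _ n).symm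
  rw [h2, hext _ h1, Padic.valuation_intCast]
  push_cast
  ring_nf

end Main


/-- The unique valuation on an algebraic closure of `ℚ_q` extending the `q`-adic
valuation, normalized by `v q = 1`. -/
def IsExtVal (q : ℕ) [Fact q.Prime] {K : Type*} [Field K] [Algebra ℚ_[q] K]
    (v : K → WithTop ℚ) : Prop :=
  (∀ x, v x = ⊤ ↔ x = 0) ∧
  (∀ x y, v (x * y) = v x + v y) ∧
  (∀ x y, min (v x) (v y) ≤ v (x + y)) ∧
  (∀ x : ℚ_[q], x ≠ 0 → v (algebraMap ℚ_[q] K x) = ((x.valuation : ℚ) : WithTop ℚ))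

/-- Conditions (i)–(ii) on `(z, s)`. -/
def SatisfiesCondIII (r : ℕ) (z s : ℤ) : Prop :=
  ∀ ℓ : ℕ, ℓ.Prime → (ℓ : ℤ) ∣ s → (ℓ : ℤ) ∣ z →
    padicValInt ℓ (s ^ 2) < padicValInt ℓ (z ^ r) ∧ ¬ (r ∣ padicValInt ℓ s)

/-- Theorem (cluster picture, case `q ≠ r`, `q ∣ s`, `q ∣ Δ`): for all
`0 ≤ j, k ≤ r − 1` with `j ≠ k`, `v_q (γ_k − γ_j) = v_q(s)/r`. -/
theorem stmt_6 (r q : ℕ) [Fact q.Prime] (hq2 : q ≠ 2) (hr : r.Prime) (hr5 : 5 ≤ r)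
    {K : Type*} [Field K] [Algebra ℚ_[q] K] [IsAlgClosure ℚ_[q] K]
    (v : K → WithTop ℚ) (hv : IsExtVal q v)
    (ζ : K) (hζ : IsPrimitiveRoot ζ r)
    (z s : ℤ) (hz : z ≠ 0)
    (δ α₀ β₀ : K) (hδ : δ ^ 2 = ((s ^ 2 - 4 * z ^ r : ℤ) : K))
    (hα : α₀ ^ r = -(((s : K) + δ) / 2)) (hβ : β₀ ^ r = -(((s : K) - δ) / 2))
    (hαβ : α₀ * β₀ = (z : K))
    (γ : ℤ → K) (hγ : ∀ j : ℤ, γ j = ζ ^ j * α₀ + ζ ^ (-j) * β₀)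
    (hcond : SatisfiesCondIII r z s)
    (hqr : q ≠ r) (hqs : (q : ℤ) ∣ s) (hqΔ : (q : ℤ) ∣ (s ^ 2 - 4 * z ^ r)) :
    ∀ j k : ℤ, 0 ≤ j → j < (r : ℤ) → 0 ≤ k → k < (r : ℤ) → j ≠ k →
      v (γ k - γ j) = (((padicValInt q s : ℚ) / (r : ℚ) : ℚ) : WithTop ℚ) := by
  classical
  obtain ⟨h0, hmul, hadd, hext⟩ := hv
  haveI : CharZero K := charZero_of_injective_algebraMap (algebraMap ℚ_[q] K).injective
  haveI : Fact r.Prime := ⟨hr⟩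
  have hq : q.Prime := Fact.out
  have hrpos : 0 < r := hr.pos
  have hr0 : r ≠ 0 := hrpos.ne'
  -- q divides z
  have hq4z : (q : ℤ) ∣ 4 * z ^ r := by
    have h1 : (q : ℤ) ∣ s ^ 2 := dvd_pow hqs two_ne_zero
    have h2 := dvd_sub h1 hqΔ
    simpa using h2
  have hqp : Prime (q : ℤ) := Nat.prime_iff_prime_int.mp hq
  have hqz : (q : ℤ) ∣ z := by
    rcases hqp.dvd_mul.mp hq4z with h | h
    · exfalso
      have h4 : (4 : ℤ) = 2 ^ 2 := by norm_num
      rw [h4] at h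
      have := hqp.dvd_of_dvd_pow h
      have h2 : q ∣ 2 := by exact_mod_cast this
      exact hq2 ((Nat.prime_dvd_prime_iff_eq hq Nat.prime_two).1 h2)
    · exact hqp.dvd_of_dvd_pow h
  obtain ⟨hlt, hndvd⟩ := hcond q hq hqs hqz
  have hs : s ≠ 0 := by
    rintro rfl
    rw [padicValInt.zero] at hndvd
    exact hndvd (dvd_zero r)
  set a := padicValInt q s with ha
  set b := padicValInt q z with hb
  have hab : 2 * a < r * b := by
    have e1 : padicValInt q (s ^ 2) = 2 * a := padicValInt_pow' hs 2
    have e2 : padicValInt q (z ^ r) = r * b := padicValInt_pow' hz r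
    rw [e1, e2] at hlt
    exact hlt
  -- valuations of s, z
  have hvs : v ((s : K)) = ((a : ℚ) : WithTop ℚ) := aux_int v hext hs
  have hvz : v ((z : K)) = ((b : ℚ) : WithTop ℚ) := aux_int v hext hz
  have hzK : (z : K) ≠ 0 := Int.cast_ne_zero.2 hz
  have hα0 : α₀ ≠ 0 := fun h => hzK (by rw [← hαβ, h, zero_mul])
  have hβ0 : β₀ ≠ 0 := fun h => hzK (by rw [← hαβ, h, mul_zero])
  obtain ⟨u, hu⟩ := aux_fin v h0 (pow_ne_zero r hα0)
  obtain ⟨w, hw⟩ := aux_fin v h0 (pow_ne_zero r hβ0)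
  have huw : u + w = r * b := by
    have h1 : v (α₀ ^ r * β₀ ^ r) = ((r * b : ℚ) : WithTop ℚ) := by
      rw [← mul_pow, hαβ]
      exact aux_pow v h0 hmul hvz r
    rw [hmul, hu, hw, ← WithTop.coe_add] at h1
    exact_mod_cast h1
  have hsumαβ : α₀ ^ r + β₀ ^ r = -(s : K) := by rw [hα, hβ]; field_simp; ring
  have hvsum : v (α₀ ^ r + β₀ ^ r) = ((a : ℚ) : WithTop ℚ) := by
    rw [hsumαβ, aux_neg v h0 hmul, hvs]
  have hmin : min u w = (a : ℚ) := by
    have hle : min u w ≤ (a : ℚ) := by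
      by_contra h
      push_neg at h
      have h1 : ((a : ℚ) : WithTop ℚ) < min (v (α₀ ^ r)) (v (β₀ ^ r)) := by
        rw [hu, hw, ← WithTop.coe_min]
        exact_mod_cast h
      have h2 := lt_of_lt_of_le h1 (hadd _ _)
      rw [hvsum] at h2
      exact lt_irrefl _ h2
    have hne : u ≠ w := by
      intro h
      rw [h, min_self] at hle
      have : (2 : ℚ) * w = r * b := by rw [← huw, h]; ring
      have hcast : (2 : ℚ) * a < r * b := by exact_mod_cast hab
      linarith
    have h3 := aux_ne v h0 hmul hadd (α₀ ^ r) (β₀ ^ r) (by rw [hu, hw]; exact_mod_cast hne)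
    rw [hvsum, hu, hw, ← WithTop.coe_min] at h3
    exact_mod_cast h3.symm
  have hva : v α₀ = ((u / r : ℚ) : WithTop ℚ) := aux_pow_inv v h0 hmul hα0 hr0 hu
  have hvb : v β₀ = ((w / r : ℚ) : WithTop ℚ) := aux_pow_inv v h0 hmul hβ0 hr0 hw
  have hner : u / (r : ℚ) ≠ w / (r : ℚ) := by
    intro h
    have hrQ : (r : ℚ) ≠ 0 := Nat.cast_ne_zero.2 hr0
    have huweq : u = w := by field_simp at h; exact h
    rw [huweq, min_self] at hmin
    have : (2 : ℚ) * a < r * b := by exact_mod_cast hab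
    rw [← huw, huweq, hmin] at this
    linarith
  have hminr : min (u / (r : ℚ)) (w / (r : ℚ)) = (a : ℚ) / r := by
    rw [min_div_div_right (show (0:ℚ) ≤ r by positivity) u w, hmin]
  -- roots of unity
  have hζ0 : ζ ≠ 0 := hζ.ne_zero hr0
  have hvζ : ∀ t : ℤ, v (ζ ^ t) = 0 := by
    intro t
    have h1 : (ζ ^ t) ^ r = 1 := by
      rw [← zpow_natCast (ζ ^ t), ← zpow_mul, mul_comm, zpow_mul, zpow_natCast,
        hζ.pow_eq_one, one_zpow]
    have h2 : ζ ^ t ≠ 0 := zpow_ne_zero t hζ0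
    have h3 : v ((ζ ^ t) ^ r) = (((0 : ℚ)) : WithTop ℚ) := by
      rw [h1, aux_one v h0 hmul]; rfl
    have := aux_pow_inv v h0 hmul h2 hr0 h3
    simpa using this
  have hprod : ∏ μ ∈ primitiveRoots r K, ((1 : K) - μ) = (r : K) := by
    have h1 := Polynomial.cyclotomic_eq_prod_X_sub_primitiveRoots hζ
    have h2 : Polynomial.eval 1 (Polynomial.cyclotomic r K) = (r : K) :=
      Polynomial.eval_one_cyclotomic_prime
    rw [h1] at h2
    simpa [Polynomial.eval_prod] using h2
  have hμnn : ∀ μ ∈ primitiveRoots r K, (0 : WithTop ℚ) ≤ v (1 - μ) := by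
    intro μ hμ
    have hp := (mem_primitiveRoots hrpos).1 hμ
    have hμ0 : μ ≠ 0 := hp.ne_zero hr0
    have hvμ : v μ = 0 := by
      have h3 : v (μ ^ r) = (((0 : ℚ)) : WithTop ℚ) := by
        rw [hp.pow_eq_one, aux_one v h0 hmul]; rfl
      simpa using aux_pow_inv v h0 hmul hμ0 hr0 h3
    have := hadd 1 (-μ)
    rw [aux_neg v h0 hmul, hvμ, aux_one v h0 hmul, min_self, ← sub_eq_add_neg] at this
    exact this
  have hvr : v ((r : K)) = 0 := by
    have hcast : ((r : ℕ) : K) = (((r : ℤ) : ℤ) : K) := by push_cast; ring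
    have hnd : ¬ (q : ℤ) ∣ (r : ℤ) := by
      intro hd
      have hd' : q ∣ r := by exact_mod_cast hd
      rcases (Nat.Prime.eq_one_or_self_of_dvd hr q hd') with h | h
      · exact hq.ne_one h
      · exact hqr h
    have h1 : padicValInt q (r : ℤ) = 0 := padicValInt.eq_zero_of_not_dvd hnd
    rw [hcast, aux_int v hext (by exact_mod_cast hr0 : ((r : ℤ) : ℤ) ≠ 0), h1]
    rfl
  have hv1ξ : ∀ ξ : K, IsPrimitiveRoot ξ r → v (1 - ξ) = 0 := by
    intro ξ hξ'
    have hmem : ξ ∈ primitiveRoots r K := (mem_primitiveRoots hrpos).2 hξ'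
    have hsum : ∑ μ ∈ primitiveRoots r K, v (1 - μ) = 0 := by
      rw [← aux_prod v h0 hmul, hprod, hvr]
    have h1 : v (1 - ξ) + ∑ μ ∈ (primitiveRoots r K).erase ξ, v (1 - μ) = 0 := by
      have := Finset.add_sum_erase (primitiveRoots r K) (fun μ => v (1 - μ)) hmem
      rw [hsum] at this
      exact this
    have h2 : (0 : WithTop ℚ) ≤ ∑ μ ∈ (primitiveRoots r K).erase ξ, v (1 - μ) :=
      Finset.sum_nonneg fun μ hμ => hμnn μ (Finset.mem_of_mem_erase hμ)
    have h3 : v (1 - ξ) ≤ 0 := h1 ▸ le_add_of_nonneg_right h2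
    exact le_antisymm h3 (hμnn ξ hmem)
  -- key computation
  have key : ∀ j k : ℤ, 0 ≤ j → k < (r : ℤ) → j < k →
      v (γ k - γ j) = (((a : ℚ) / (r : ℚ) : ℚ) : WithTop ℚ) := by
    intro j k hj0 hkr hjk
    set m : ℕ := (k - j).toNat with hmdef
    have hm1 : (m : ℤ) = k - j := Int.toNat_of_nonneg (by omega)
    have hmpos : 0 < m := by omega
    have hmr : m < r := by omega
    have hfac : γ k - γ j = (ζ ^ k - ζ ^ j) * (α₀ - ζ ^ (-(j + k)) * β₀) := by
      rw [hγ, hγ]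
      have e1 : ζ ^ (-(j + k)) * ζ ^ k = ζ ^ (-j) := by
        rw [← zpow_add₀ hζ0]; congr 1; ring
      have e2 : ζ ^ (-(j + k)) * ζ ^ j = ζ ^ (-k) := by
        rw [← zpow_add₀ hζ0]; congr 1; ring
      linear_combination β₀ * e1 - β₀ * e2
    have hprim : IsPrimitiveRoot (ζ ^ m) r := by
      apply hζ.pow_of_coprime
      exact ((hr.coprime_iff_not_dvd).2 fun hd => by
        have := Nat.le_of_dvd hmpos hd; omega).symm
    have hsplit : ζ ^ k - ζ ^ j = ζ ^ j * (ζ ^ m - 1) := by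
      rw [mul_sub, mul_one, ← zpow_natCast ζ m, ← zpow_add₀ hζ0, hm1]
      congr 2
      ring
    have hv1 : v (ζ ^ k - ζ ^ j) = 0 := by
      rw [hsplit, hmul, hvζ j]
      have : v (ζ ^ m - 1) = 0 := by
        have := hv1ξ (ζ ^ m) hprim
        rw [← aux_neg v h0 hmul (1 - ζ ^ m), neg_sub] at this
        exact this
      rw [this, add_zero]
    have hv2 : v (α₀ - ζ ^ (-(j + k)) * β₀) = (((a : ℚ) / (r : ℚ) : ℚ) : WithTop ℚ) := by
      have hvtb : v (ζ ^ (-(j + k)) * β₀) = ((w / r : ℚ) : WithTop ℚ) := by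
        rw [hmul, hvζ _, hvb, zero_add]
      rw [sub_eq_add_neg]
      have hne2 : v α₀ ≠ v (-(ζ ^ (-(j + k)) * β₀)) := by
        rw [aux_neg v h0 hmul, hva, hvtb]
        exact_mod_cast hner
      rw [aux_ne v h0 hmul hadd _ _ hne2, aux_neg v h0 hmul, hva, hvtb,
        ← WithTop.coe_min, hminr]
    rw [hfac, hmul, hv1, hv2, zero_add]
  -- conclusion
  intro j k hj0 hjr hk0 hkr hjk
  rcases lt_or_gt_of_ne hjk with h | h
  · exact key j k hj0 hkr h
  · have : γ k - γ j = -(γ j - γ k) := by ring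
    rw [this, aux_neg v h0 hmul]
    exact key k j hk0 hjr h
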